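/- For 0 < α < 1, the function σ(t) = sin(t^α)/(1+t) satisfies the stabilisation condition with rate Θ(t) = t^{1-α}: there exist constants C and ω∞ > 0 such that ∫₀ᵗ |exp(∫₀^θ σ(s) ds) - ω∞| dθ ≤ C(1 + t^{1-α}) for all t ≥ 0; in particular this is o(t). -/

import Mathlib

open MeasureTheory intervalIntegral Real Set Filter Asymptotics Topology

/-!
Writing `sin (s ^ α) / (1 + s) = g s * (d/ds) (-cos (s ^ α))` with the weight
`g s = s ^ (1 - α) / (α * (1 + s))`, which decreases for `s ≥ (1 - α) / α`, an integration by
parts bounds the tail `∫_θ^∞ σ` by `(2 / α) θ ^ (-α)`. Hence `|exp (∫₀^θ σ) - ω∞| = O(θ ^ (-α))`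
as `θ → ∞`; being bounded near `0`, it is `O(θ ^ (-α))` on all of `(0, ∞)`, and `θ ^ (-α)`
integrates to `t ^ (1 - α) / (1 - α)` on `[0, t]` because `α < 1`.
-/

theorem abs_integral_mul_deriv_le_of_deriv_nonpos {f f' g g' : ℝ → ℝ} {a b M : ℝ} (hab : a ≤ b)
    (hf : ∀ x ∈ Icc a b, HasDerivAt f (f' x) x) (hg : ∀ x ∈ Icc a b, HasDerivAt g (g' x) x)
    (hf' : IntervalIntegrable f' volume a b) (hg' : IntervalIntegrable g' volume a b)
    (hg'_nonpos : ∀ x ∈ Icc a b, g' x ≤ 0) (hgb : 0 ≤ g b) (hfM : ∀ x ∈ Icc a b, |f x| ≤ M) :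
    |∫ x in a..b, g x * f' x| ≤ 2 * M * g a := by
  rw [← uIcc_of_le hab] at hf hg
  have hab' : a ∈ Icc a b := ⟨le_rfl, hab⟩
  have hbb : b ∈ Icc a b := ⟨hab, le_rfl⟩
  have hfc : ContinuousOn f (uIcc a b) := fun x hx => (hf x hx).continuousAt.continuousWithinAt
  have hgc : ContinuousOn g (uIcc a b) := fun x hx => (hg x hx).continuousAt.continuousWithinAt
  have hftc : ∫ x in a..b, g' x = g b - g a := integral_eq_sub_of_hasDerivAt hg hg'
  have hga : g b ≤ g a := by
    have := integral_nonneg (μ := volume) hab fun x hx => neg_nonneg.mpr (hg'_nonpos x hx)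
    rw [intervalIntegral.integral_neg, hftc] at this
    linarith
  have hparts : ∫ x in a..b, g x * f' x = g b * f b - g a * f a - ∫ x in a..b, g' x * f x :=
    integral_mul_deriv_eq_deriv_mul_of_hasDerivAt hgc hfc
      (fun x hx => hg x (Ioo_subset_Icc_self hx)) (fun x hx => hf x (Ioo_subset_Icc_self hx))
      hg' hf'
  -- `|g'| = -g'` makes the remainder integral telescope to `(g a - g b) * M`.
  have hrem : |∫ x in a..b, g' x * f x| ≤ (g a - g b) * M := by
    have := norm_integral_le_of_norm_le hab (f := fun x => g' x * f x) (g := fun x => -g' x * M)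
      (Eventually.of_forall fun x hx => ?_) (hg'.neg.mul_const M)
    · simpa only [Real.norm_eq_abs, intervalIntegral.integral_mul_const,
        intervalIntegral.integral_neg, hftc, neg_sub] using this
    · have hx' : x ∈ Icc a b := Ioc_subset_Icc_self hx
      rw [Real.norm_eq_abs, abs_mul, abs_of_nonpos (hg'_nonpos x hx')]
      exact mul_le_mul_of_nonneg_left (hfM x hx') (neg_nonneg.mpr (hg'_nonpos x hx'))
  have hb : |g b * f b| ≤ M * g b := by
    rw [abs_mul, abs_of_nonneg hgb, mul_comm]; exact mul_le_mul_of_nonneg_right (hfM b hbb) hgb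
  have ha : |g a * f a| ≤ M * g a := by
    rw [abs_mul, abs_of_nonneg (hgb.trans hga), mul_comm]
    exact mul_le_mul_of_nonneg_right (hfM a hab') (hgb.trans hga)
  rw [hparts]
  obtain ⟨ha₁, ha₂⟩ := abs_le.mp ha
  obtain ⟨hb₁, hb₂⟩ := abs_le.mp hb
  obtain ⟨hr₁, hr₂⟩ := abs_le.mp hrem
  exact abs_le.mpr ⟨by linarith, by linarith⟩

theorem hasDerivAt_rpow_one_sub_div {α s : ℝ} (hα : α ≠ 0) (hs : 0 < s) :
    HasDerivAt (fun s => s ^ (1 - α) / (α * (1 + s)))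
      (s ^ (-α) * (1 - α - α * s) / (α * (1 + s) ^ 2)) s := by
  have h := (hasDerivAt_rpow_const (p := 1 - α) (Or.inl hs.ne')).fun_div
    (((hasDerivAt_id' s).const_add 1).const_mul α) (by positivity)
  refine h.congr_deriv ?_
  rw [show 1 - α - 1 = -α by ring, show 1 - α = -α + 1 by ring, rpow_add_one hs.ne']
  field_simp
  ring

theorem hasDerivAt_neg_cos_rpow {α s : ℝ} (hs : 0 < s) :
    HasDerivAt (fun s => -cos (s ^ α)) (sin (s ^ α) * (α * s ^ (α - 1))) s := by
  simpa using ((hasDerivAt_rpow_const (p := α) (Or.inl hs.ne')).cos).fun_neg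

theorem rpow_neg_mul_div_nonpos {α s : ℝ} (hα : 0 < α) (hs₀ : 0 < s) (hs : (1 - α) / α ≤ s) :
    s ^ (-α) * (1 - α - α * s) / (α * (1 + s) ^ 2) ≤ 0 := by
  have hnum : 1 - α - α * s ≤ 0 := by
    have := (div_le_iff₀ hα).mp hs; linarith
  have := rpow_pos_of_pos hs₀ (-α)
  exact div_nonpos_of_nonpos_of_nonneg (mul_nonpos_of_nonneg_of_nonpos this.le hnum) (by positivity)

theorem abs_integral_sin_rpow_div_one_add_le {α θ T : ℝ} (hα : 0 < α) (hθ₀ : 0 < θ)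
    (hθ : (1 - α) / α ≤ θ) (hθT : θ ≤ T) :
    |∫ s in θ..T, sin (s ^ α) / (1 + s)| ≤ 2 / α * θ ^ (-α) := by
  have hpos : ∀ s ∈ Icc θ T, 0 < s := fun s hs => hθ₀.trans_le hs.1
  have hcont : ∀ {h : ℝ → ℝ}, (∀ s, 0 < s → ContinuousAt h s) → IntervalIntegrable h volume θ T :=
    fun hh => ContinuousOn.intervalIntegrable fun s hs =>
      (hh s (hpos s (by rwa [uIcc_of_le hθT] at hs))).continuousWithinAt
  have hintegrand : ∀ s ∈ uIcc θ T, sin (s ^ α) / (1 + s)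
      = s ^ (1 - α) / (α * (1 + s)) * (sin (s ^ α) * (α * s ^ (α - 1))) := by
    intro s hs
    have hs₀ := hpos s (by rwa [uIcc_of_le hθT] at hs)
    have hpow : s ^ (1 - α) * s ^ (α - 1) = 1 := by
      rw [← rpow_add hs₀]; norm_num
    field_simp
    linear_combination (-sin (s ^ α)) * hpow
  have hweight := abs_integral_mul_deriv_le_of_deriv_nonpos (M := 1) hθT
    (f' := fun s => sin (s ^ α) * (α * s ^ (α - 1)))
    (g' := fun s => s ^ (-α) * (1 - α - α * s) / (α * (1 + s) ^ 2))
    (fun s hs => hasDerivAt_neg_cos_rpow (hpos s hs))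
    (fun s hs => hasDerivAt_rpow_one_sub_div hα.ne' (hpos s hs))
    (hcont fun s hs => by fun_prop (disch := exact Or.inl hs.ne'))
    (hcont fun s hs => by fun_prop (disch := first | exact Or.inl hs.ne' | positivity))
    (fun s hs => rpow_neg_mul_div_nonpos hα (hpos s hs) (hθ.trans hs.1))
    (by have := hpos T ⟨hθT, le_rfl⟩; positivity)
    (fun s _ => by simpa only [abs_neg] using abs_cos_le_one _)
  rw [integral_congr hintegrand]
  refine hweight.trans ?_
  have hθpow : θ ^ (1 - α) = θ ^ (-α) * θ := by
    rw [show 1 - α = -α + 1 by ring, rpow_add_one hθ₀.ne']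
  have hθw : θ ^ (-α) * θ / (α * (1 + θ)) ≤ θ ^ (-α) / α := by
    have := rpow_pos_of_pos hθ₀ (-α)
    rw [div_le_div_iff₀ (by positivity) hα]
    nlinarith
  calc 2 * 1 * (θ ^ (1 - α) / (α * (1 + θ))) = 2 * (θ ^ (-α) * θ / (α * (1 + θ))) := by
        rw [hθpow, mul_one]
    _ ≤ 2 * (θ ^ (-α) / α) := by gcongr
    _ = 2 / α * θ ^ (-α) := by ring

theorem continuousOn_primitive_Ici {f : ℝ → ℝ} {a : ℝ}
    (hf : ∀ b ≥ a, IntervalIntegrable f volume a b) :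
    ContinuousOn (fun b => ∫ x in a..b, f x) (Ici a) := by
  intro x hx
  have hx₁ : x < x + 1 := lt_add_one x
  have hcont := continuousOn_primitive_interval' (hf (x + 1) (by linarith [mem_Ici.mp hx]))
    left_mem_uIcc
  rw [uIcc_of_le (by linarith [mem_Ici.mp hx])] at hcont
  refine (hcont x ⟨hx, hx₁.le⟩).mono_of_mem_nhdsWithin ?_
  rw [← Ici_inter_Iic]
  exact inter_mem_nhdsWithin _ (Iic_mem_nhds hx₁)

theorem intervalIntegrable_sin_rpow_div_one_add {α a b : ℝ} (hα : 0 ≤ α) (ha : 0 ≤ a)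
    (hb : 0 ≤ b) : IntervalIntegrable (fun s => sin (s ^ α) / (1 + s)) volume a b := by
  refine ContinuousOn.intervalIntegrable fun s hs => ContinuousAt.continuousWithinAt ?_
  have : 0 ≤ s := (le_min ha hb).trans hs.1
  fun_prop (disch := first | exact Or.inr hα | positivity)

theorem abs_primitive_sin_rpow_div_one_add_sub_le {α θ I : ℝ} (hα : 0 < α) (hθ₀ : 0 < θ)
    (hθ : (1 - α) / α ≤ θ)
    (hI : Tendsto (fun T => ∫ s in (0 : ℝ)..T, sin (s ^ α) / (1 + s)) atTop (𝓝 I)) :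
    |(∫ s in (0 : ℝ)..θ, sin (s ^ α) / (1 + s)) - I| ≤ 2 / α * θ ^ (-α) := by
  have hlim := (hI.const_sub (∫ s in (0 : ℝ)..θ, sin (s ^ α) / (1 + s))).abs
  refine le_of_tendsto hlim ?_
  filter_upwards [eventually_ge_atTop θ] with T hT
  rw [abs_sub_comm, integral_interval_sub_left
    (intervalIntegrable_sin_rpow_div_one_add hα.le le_rfl (hθ₀.le.trans hT))
    (intervalIntegrable_sin_rpow_div_one_add hα.le le_rfl hθ₀.le)]
  exact abs_integral_sin_rpow_div_one_add_le hα hθ₀ hθ hT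

theorem eventually_abs_exp_sub_exp_le {ι : Type*} {l : Filter ι} {F : ι → ℝ} {I : ℝ}
    (hF : Tendsto F l (𝓝 I)) : ∀ᶠ i in l, |exp (F i) - exp I| ≤ 2 * exp I * |F i - I| := by
  filter_upwards [Metric.tendsto_nhds.mp hF 1 one_pos] with i hi
  have hexp : exp (F i) - exp I = exp I * (exp (F i - I) - 1) := by
    rw [exp_sub]; field_simp
  rw [hexp, abs_mul, abs_of_pos (exp_pos I), mul_comm 2, mul_assoc]
  exact mul_le_mul_of_nonneg_left (abs_exp_sub_one_le (Real.dist_eq _ _ ▸ hi.le)) (exp_pos I).le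

theorem exists_forall_le_mul_rpow_neg {G : ℝ → ℝ} {α K : ℝ} (hα : 0 ≤ α)
    (hG : ContinuousOn G (Ici 0)) (htail : ∀ᶠ θ in atTop, G θ ≤ K * θ ^ (-α)) :
    ∃ K', ∀ θ > 0, G θ ≤ K' * θ ^ (-α) := by
  obtain ⟨θ₀, hθ₀⟩ := eventually_atTop.mp htail
  set θ₁ := max θ₀ 1
  have hθ₁ : 0 < θ₁ := lt_max_of_lt_right one_pos
  obtain ⟨M, hM⟩ := isCompact_Icc.exists_bound_of_continuousOn
    (hG.mono fun _ hx => hx.1 : ContinuousOn G (Icc 0 θ₁))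
  refine ⟨max K (M * θ₁ ^ α), fun θ hθ => ?_⟩
  have hθpow : 0 ≤ θ ^ (-α) := rpow_nonneg hθ.le _
  rcases le_total θ θ₁ with hθθ₁ | hθ₁θ
  · have hM₀ : 0 ≤ M := (norm_nonneg _).trans (hM θ ⟨hθ.le, hθθ₁⟩)
    calc G θ ≤ M := (le_abs_self _).trans (hM θ ⟨hθ.le, hθθ₁⟩)
      _ = M * θ₁ ^ α * θ₁ ^ (-α) := by
          rw [rpow_neg hθ₁.le, mul_assoc, mul_inv_cancel₀ (rpow_pos_of_pos hθ₁ α).ne', mul_one]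
      _ ≤ M * θ₁ ^ α * θ ^ (-α) :=
          mul_le_mul_of_nonneg_left (rpow_le_rpow_of_nonpos hθ hθθ₁ (neg_nonpos.mpr hα))
            (by positivity)
      _ ≤ max K (M * θ₁ ^ α) * θ ^ (-α) := by gcongr; exact le_max_right _ _
  · calc G θ ≤ K * θ ^ (-α) := hθ₀ θ ((le_max_left _ _).trans hθ₁θ)
      _ ≤ max K (M * θ₁ ^ α) * θ ^ (-α) := by gcongr; exact le_max_left _ _

theorem integral_le_of_le_mul_rpow_neg {G : ℝ → ℝ} {α K t : ℝ} (hα : α < 1) (ht : 0 ≤ t)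
    (hG : IntervalIntegrable G volume 0 t) (hGK : ∀ θ > 0, G θ ≤ K * θ ^ (-α)) :
    ∫ θ in (0 : ℝ)..t, G θ ≤ K / (1 - α) * t ^ (1 - α) := by
  have hα' : -1 < -α := by linarith
  calc ∫ θ in (0 : ℝ)..t, G θ ≤ ∫ θ in (0 : ℝ)..t, K * θ ^ (-α) :=
        integral_mono_on_of_le_Ioo ht hG ((intervalIntegrable_rpow' hα').const_mul K)
          fun θ hθ => hGK θ hθ.1
    _ = K / (1 - α) * t ^ (1 - α) := by
        rw [intervalIntegral.integral_const_mul, integral_rpow (Or.inl hα'),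
          show -α + 1 = 1 - α by ring, zero_rpow (by linarith)]
        ring

theorem isLittleO_rpow_rpow_atTop {p q : ℝ} (hpq : p < q) :
    (fun x : ℝ => x ^ p) =o[atTop] fun x => x ^ q := by
  have hdecay : (fun x : ℝ => x ^ (p - q)) =o[atTop] fun _ => (1 : ℝ) :=
    (isLittleO_one_iff ℝ).mpr <| by
      simpa only [neg_sub] using tendsto_rpow_neg_atTop (sub_pos.mpr hpq)
  refine ((hdecay.mul_isBigO (isBigO_refl (fun x : ℝ => x ^ q) atTop)).congr' ?_ ?_)
  · filter_upwards [eventually_gt_atTop 0] with x hx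
    rw [← rpow_add hx, sub_add_cancel]
  · simp

theorem sin_rpow_stabilisation (α : ℝ) (hα0 : 0 < α) (hα1 : α < 1) (I : ℝ)
    (hI : Filter.Tendsto (fun T : ℝ => ∫ s in (0:ℝ)..T, Real.sin (s ^ α) / (1 + s))
      Filter.atTop (nhds I)) :
    (∃ C : ℝ, ∀ t : ℝ, 0 ≤ t →
      (∫ θ in (0:ℝ)..t,
          |Real.exp (∫ s in (0:ℝ)..θ, Real.sin (s ^ α) / (1 + s)) - Real.exp I|)
        ≤ C * (1 + t ^ (1 - α))) ∧
    (fun t : ℝ => ∫ θ in (0:ℝ)..t,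
        |Real.exp (∫ s in (0:ℝ)..θ, Real.sin (s ^ α) / (1 + s)) - Real.exp I|)
      =o[Filter.atTop] (fun t : ℝ => t) := by
  set F : ℝ → ℝ := fun θ => ∫ s in (0 : ℝ)..θ, sin (s ^ α) / (1 + s)
  set G : ℝ → ℝ := fun θ => |exp (F θ) - exp I|
  have hG : ContinuousOn G (Ici 0) :=
    ((continuous_exp.comp_continuousOn (continuousOn_primitive_Ici fun b hb =>
      intervalIntegrable_sin_rpow_div_one_add hα0.le le_rfl hb)).sub continuousOn_const).abs
  have htail : ∀ᶠ θ in atTop, G θ ≤ 2 * exp I * (2 / α) * θ ^ (-α) := by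
    filter_upwards [eventually_abs_exp_sub_exp_le hI, eventually_gt_atTop 0,
      eventually_ge_atTop ((1 - α) / α)] with θ hexp hθ₀ hθ
    calc G θ ≤ 2 * exp I * |F θ - I| := hexp
      _ ≤ 2 * exp I * (2 / α * θ ^ (-α)) := by
          gcongr; exact abs_primitive_sin_rpow_div_one_add_sub_le hα0 hθ₀ hθ hI
      _ = 2 * exp I * (2 / α) * θ ^ (-α) := by ring
  obtain ⟨K, hK⟩ := exists_forall_le_mul_rpow_neg hα0.le hG htail
  have hC : 0 ≤ K / (1 - α) :=
    div_nonneg (by simpa using (abs_nonneg _).trans (hK 1 one_pos)) (by linarith)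
  have hbound : ∀ t ≥ 0, ∫ θ in (0 : ℝ)..t, G θ ≤ K / (1 - α) * t ^ (1 - α) := fun t ht =>
    integral_le_of_le_mul_rpow_neg hα1 ht
      (hG.mono fun _ hx => (le_min le_rfl ht).trans hx.1).intervalIntegrable hK
  refine ⟨⟨K / (1 - α), fun t ht => (hbound t ht).trans (by nlinarith)⟩, ?_⟩
  refine IsBigO.trans_isLittleO (g := fun t => t ^ (1 - α)) (IsBigO.of_bound (K / (1 - α)) ?_)
    ((isLittleO_rpow_rpow_atTop (by linarith)).congr_right rpow_one)
  filter_upwards [eventually_ge_atTop 0] with t ht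
  rw [norm_of_nonneg (integral_nonneg ht fun _ _ => abs_nonneg _),
    norm_of_nonneg (rpow_nonneg ht _)]
  exact hbound t ht
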